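/- Let H be a digraph containing both a ∀-canon x and an ∃-canon y. Then for every prenex sentence φ of positive equality-free first-order logic, H ⊨ φ if and only if H ⊨ φ[∀/x, ∃/y], the quantifier-free sentence obtained by instantiating every universal variable as x and every existential variable as y. -/

import Mathlib

/-- Quantifier-free positive equality-free formulas over the digraph signature,
with `n` free variables. -/
inductive QF : ℕ → Type
  | atom {n : ℕ} (i j : Fin n) : QF n
  | conj {n : ℕ} (φ ψ : QF n) : QF n
  | disj {n : ℕ} (φ ψ : QF n) : QF n

/-- Prenex positive equality-free first-order formulas over the digraph signature. -/
inductive PFO : ℕ → Type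
  | qf  {n : ℕ} (φ : QF n) : PFO n
  | ex  {n : ℕ} (φ : PFO (n + 1)) : PFO n
  | all {n : ℕ} (φ : PFO (n + 1)) : PFO n

def QF.eval {V : Type*} (E : V → V → Prop) : {n : ℕ} → QF n → (Fin n → V) → Prop
  | _, .atom i j, ρ => E (ρ i) (ρ j)
  | _, .conj φ ψ, ρ => φ.eval E ρ ∧ ψ.eval E ρ
  | _, .disj φ ψ, ρ => φ.eval E ρ ∨ ψ.eval E ρ

/-- Evaluation of a prenex formula, where `u = some x` means every universal
variable is instantiated as `x` (instead of being genuinely universally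
quantified), and `e = some y` means every existential variable is instantiated
as `y`. `none` means genuine quantification. -/
def PFO.eval {V : Type*} (E : V → V → Prop) (u e : Option V) :
    {n : ℕ} → PFO n → (Fin n → V) → Prop
  | _, .qf φ, ρ => φ.eval E ρ
  | _, .ex φ, ρ =>
      match e with
      | none => ∃ v, φ.eval E u e (Fin.snoc ρ v)
      | some y => φ.eval E u e (Fin.snoc ρ y)
  | _, .all φ, ρ =>
      match u with
      | none => ∀ v, φ.eval E u e (Fin.snoc ρ v)
      | some x => φ.eval E u e (Fin.snoc ρ x)

/-- Satisfaction of a prenex sentence by the digraph `(V, E)`, with optional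
instantiation of the universal (`u`) and existential (`e`) variables. -/
def PFO.Sat {V : Type*} (E : V → V → Prop) (u e : Option V) (φ : PFO 0) : Prop :=
  φ.eval E u e (fun i => i.elim0)

/-!
The two kinds of quantifier can be instantiated one at a time. Moving endpoints of an edge to
the ∃-canon `y` keeps it an edge, so every existential witness may be replaced by `y`; an edge
at the ∀-canon `x` is an edge for every value in place of `x`, so what holds with `x` in the
universal positions holds for all values there. The converse directions are specialization of
the universals and witnessing the existentials by `y`.
-/

section

variable {V : Type*} {E : V → V → Prop}

def IsForallCanon (E : V → V → Prop) (x : V) : Prop :=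
  ∀ v, (E x v → ∀ z, E z v) ∧ (E v x → ∀ z, E v z)

def IsExistsCanon (E : V → V → Prop) (y : V) : Prop :=
  ∀ u z, E u z → E y z ∧ E u y

theorem Fin.forall_snoc_eq_or_eq {n : ℕ} {c a a' : V} {σ σ' : Fin n → V}
    (hσ : ∀ i, σ' i = σ i ∨ σ' i = c) (ha : a' = a ∨ a' = c) :
    ∀ i, (Fin.snoc σ' a' : Fin (n + 1) → V) i = (Fin.snoc σ a : Fin (n + 1) → V) i ∨
      (Fin.snoc σ' a' : Fin (n + 1) → V) i = c := by
  refine Fin.lastCases ?_ fun i => ?_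
  · simpa using ha
  · simpa using hσ i

theorem QF.eval_of_forall₂ {R : V → V → Prop}
    (hR : ∀ a b a' b', R a a' → R b b' → E a b → E a' b') {n : ℕ} (φ : QF n)
    {ρ ρ' : Fin n → V} (hρ : ∀ i, R (ρ i) (ρ' i)) : φ.eval E ρ → φ.eval E ρ' := by
  induction φ with simp only [QF.eval]
  | atom i j => exact hR _ _ _ _ (hρ i) (hρ j)
  | conj φ ψ ihφ ihψ => exact And.imp ihφ ihψ
  | disj φ ψ ihφ ihψ => exact Or.imp ihφ ihψ

theorem IsExistsCanon.edge_of_replace {y : V} (hy : IsExistsCanon E y) {a b a' b' : V}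
    (ha : a' = a ∨ a' = y) (hb : b' = b ∨ b' = y) (h : E a b) : E a' b' := by
  rcases ha with rfl | rfl <;> rcases hb with rfl | rfl
  · exact h
  · exact (hy _ _ h).2
  · exact (hy _ _ h).1
  · exact (hy _ _ (hy _ _ h).1).2

theorem IsForallCanon.edge_of_replace {x : V} (hx : IsForallCanon E x) {a b a' b' : V}
    (ha : a = a' ∨ a = x) (hb : b = b' ∨ b = x) (h : E a b) : E a' b' := by
  rcases ha with rfl | rfl <;> rcases hb with rfl | rfl
  · exact h
  · exact (hx _).2 h _
  · exact (hx _).1 h _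
  · exact (hx _).2 ((hx _).1 h _) _

theorem PFO.eval_some_all_of_eval (x : V) {e : Option V} {n : ℕ} (φ : PFO n) (ρ : Fin n → V) :
    φ.eval E none e ρ → φ.eval E (some x) e ρ := by
  induction φ with
  | qf φ => exact id
  | ex φ ih => cases e with
    | none => exact Exists.imp fun v => ih _
    | some y => exact ih _
  | all φ ih => exact fun h => ih _ (h x)

theorem PFO.eval_none_ex_of_eval (y : V) {u : Option V} {n : ℕ} (φ : PFO n) (ρ : Fin n → V) :
    φ.eval E u (some y) ρ → φ.eval E u none ρ := by
  induction φ with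
  | qf φ => exact id
  | ex φ ih => exact fun h => ⟨y, ih _ h⟩
  | all φ ih => cases u with
    | none => exact forall_imp fun v => ih _
    | some x => exact ih _

theorem IsExistsCanon.eval_some_ex_of_eval {y : V} (hy : IsExistsCanon E y) {u : Option V}
    {n : ℕ} (φ : PFO n) {ρ ρ' : Fin n → V} (hρ : ∀ i, ρ' i = ρ i ∨ ρ' i = y) :
    φ.eval E u none ρ → φ.eval E u (some y) ρ' := by
  induction φ with
  | qf φ =>
    exact QF.eval_of_forall₂ (R := fun a a' => a' = a ∨ a' = y)
      (fun _ _ _ _ => hy.edge_of_replace) φ hρ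
  | ex φ ih =>
    rintro ⟨v, hv⟩
    exact ih (Fin.forall_snoc_eq_or_eq hρ (Or.inr rfl)) hv
  | all φ ih => cases u with
    | none => exact forall_imp fun v => ih (Fin.forall_snoc_eq_or_eq hρ (Or.inl rfl))
    | some x => exact ih (Fin.forall_snoc_eq_or_eq hρ (Or.inl rfl))

theorem IsForallCanon.eval_none_all_of_eval {x : V} (hx : IsForallCanon E x) {e : Option V}
    {n : ℕ} (φ : PFO n) {ρ ρ' : Fin n → V} (hρ : ∀ i, ρ i = ρ' i ∨ ρ i = x) :
    φ.eval E (some x) e ρ → φ.eval E none e ρ' := by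
  induction φ with
  | qf φ =>
    exact QF.eval_of_forall₂ (R := fun a a' => a = a' ∨ a = x)
      (fun _ _ _ _ => hx.edge_of_replace) φ hρ
  | ex φ ih => cases e with
    | none => exact Exists.imp fun v => ih (Fin.forall_snoc_eq_or_eq hρ (Or.inl rfl))
    | some y => exact ih (Fin.forall_snoc_eq_or_eq hρ (Or.inl rfl))
  | all φ ih => exact fun h v => ih (Fin.forall_snoc_eq_or_eq hρ (Or.inr rfl)) h

theorem IsExistsCanon.sat_some_ex_iff {y : V} (hy : IsExistsCanon E y) (u : Option V)
    (φ : PFO 0) : PFO.Sat E u (some y) φ ↔ PFO.Sat E u none φ :=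
  ⟨φ.eval_none_ex_of_eval y _, hy.eval_some_ex_of_eval φ finZeroElim⟩

theorem IsForallCanon.sat_some_all_iff {x : V} (hx : IsForallCanon E x) (e : Option V)
    (φ : PFO 0) : PFO.Sat E (some x) e φ ↔ PFO.Sat E none e φ :=
  ⟨hx.eval_none_all_of_eval φ finZeroElim, φ.eval_some_all_of_eval x _⟩

end

/-- if `x` is a ∀-canon and `y` is an ∃-canon of the digraph `(V, E)`,
then a prenex positive equality-free sentence holds iff the quantifier-free
instantiation (universals at `x`, existentials at `y`) holds. -/
theorem stmt3 {V : Type*} (E : V → V → Prop) (x y : V)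
    (hx : ∀ v, (E x v → ∀ z, E z v) ∧ (E v x → ∀ z, E v z))
    (hy : ∀ u z, E u z → E y z ∧ E u y) :
    ∀ φ : PFO 0, PFO.Sat E none none φ ↔ PFO.Sat E (some x) (some y) φ := by
  intro φ
  rw [IsForallCanon.sat_some_all_iff hx, IsExistsCanon.sat_some_ex_iff hy]
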